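/- Let 0 < π < 1 and let X_1 ∼ P_1, X_2 ∼ P_2 be random variables, and let f: ℝ → ℝ and c ∈ ℝ be arbitrary with (f(x) - c)² > 0 almost surely for x drawn from either distribution. Then E[π(f(X_1)-c)² + (1-π)/(f(X_2)-c)² + π(f(X_2)-c)² + (1-π)/(f(X_1)-c)²] ≥ 4√(π(1-π)), with equality if (f(x)-c)² = √((1-π)/π) almost surely under both P_1 and P_2. -/

import Mathlib

open MeasureTheory

/-
Pointwise, `p u + (1 - p) / u ≥ 2 √(p (1 - p))` for every `u > 0` by AM-GM, with equality exactly at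
`u = √((1 - p) / p)`. The loss is two such terms, one for each distribution, so its integral is at
least `4 √(p (1 - p))` whatever the distributions are, and the bound is attained when both squared
distances are a.s. equal to that minimiser.
-/

theorem two_sqrt_mul_le_mul_add_div {a b x : ℝ} (ha : 0 ≤ a) (hb : 0 ≤ b) (hx : 0 < x) :
    2 * √(a * b) ≤ a * x + b / x := by
  have hsq : a * x + b / x - 2 * √(a * b) = (√a * x - √b) ^ 2 / x := by
    rw [Real.sqrt_mul ha]
    field_simp
    linear_combination (-x ^ 2) * Real.sq_sqrt ha - Real.sq_sqrt hb
  have : 0 ≤ a * x + b / x - 2 * √(a * b) := hsq ▸ by positivity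
  linarith

theorem mul_sqrt_div_add_div_sqrt_div {a b : ℝ} (ha : 0 < a) (hb : 0 ≤ b) :
    a * √(b / a) + b / √(b / a) = 2 * √(a * b) := by
  rcases hb.eq_or_lt with rfl | hb
  · simp
  have hsa : 0 < √a := Real.sqrt_pos.2 ha
  have hsb : 0 < √b := Real.sqrt_pos.2 hb
  rw [Real.sqrt_div' _ ha.le, Real.sqrt_mul ha.le]
  field_simp
  rw [Real.sq_sqrt ha.le, Real.sq_sqrt hb.le]
  ring

theorem four_sqrt_mul_le_symm_loss {a b u v : ℝ} (ha : 0 ≤ a) (hb : 0 ≤ b) (hu : 0 < u)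
    (hv : 0 < v) : 4 * √(a * b) ≤ a * u + b / v + a * v + b / u := by
  linarith [two_sqrt_mul_le_mul_add_div ha hb hu, two_sqrt_mul_le_mul_add_div ha hb hv]

/-- Without batch normalization, the symmetric meta outlier exposure loss for Deep SVDD
with two training distributions has the distribution-independent lower bound 4√(p(1-p)),
with equality when (f(x)-c)² = √((1-p)/p) almost surely under both distributions. -/
theorem stmt6 {Ω : Type*} [MeasurableSpace Ω] (μ : Measure Ω) [IsProbabilityMeasure μ]
    (p : ℝ) (hp0 : 0 < p) (hp1 : p < 1)
    (X₁ X₂ : Ω → ℝ) (f : ℝ → ℝ) (c : ℝ)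
    (h1 : ∀ᵐ ω ∂μ, 0 < (f (X₁ ω) - c) ^ 2)
    (h2 : ∀ᵐ ω ∂μ, 0 < (f (X₂ ω) - c) ^ 2)
    (hint : Integrable (fun ω =>
      p * (f (X₁ ω) - c) ^ 2 + (1 - p) / (f (X₂ ω) - c) ^ 2
        + p * (f (X₂ ω) - c) ^ 2 + (1 - p) / (f (X₁ ω) - c) ^ 2) μ) :
    4 * Real.sqrt (p * (1 - p)) ≤
      ∫ ω, (p * (f (X₁ ω) - c) ^ 2 + (1 - p) / (f (X₂ ω) - c) ^ 2
        + p * (f (X₂ ω) - c) ^ 2 + (1 - p) / (f (X₁ ω) - c) ^ 2) ∂μ ∧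
    ((∀ᵐ ω ∂μ, (f (X₁ ω) - c) ^ 2 = Real.sqrt ((1 - p) / p)) →
     (∀ᵐ ω ∂μ, (f (X₂ ω) - c) ^ 2 = Real.sqrt ((1 - p) / p)) →
      ∫ ω, (p * (f (X₁ ω) - c) ^ 2 + (1 - p) / (f (X₂ ω) - c) ^ 2
        + p * (f (X₂ ω) - c) ^ 2 + (1 - p) / (f (X₁ ω) - c) ^ 2) ∂μ
        = 4 * Real.sqrt (p * (1 - p))) := by
  have hq : 0 ≤ 1 - p := by linarith
  constructor
  · calc 4 * √(p * (1 - p)) = ∫ _, 4 * √(p * (1 - p)) ∂μ := by simp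
      _ ≤ _ := integral_mono_ae (integrable_const _) hint <| by
        filter_upwards [h1, h2] with ω hu hv using four_sqrt_mul_le_symm_loss hp0.le hq hu hv
  · intro hA hB
    have hmin := mul_sqrt_div_add_div_sqrt_div hp0 hq
    calc _ = ∫ _, 4 * √(p * (1 - p)) ∂μ := integral_congr_ae <| by
          filter_upwards [hA, hB] with ω hu hv
          rw [hu, hv]
          linarith
      _ = 4 * √(p * (1 - p)) := by simp
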